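/- arXiv:1401.5086 — 3 statements merged into one kernel-verified Lean document; each statement's English description precedes it below -/
import Mathlib

section
/- Let f ∈ ℂ[x], k ≥ 1, and let I ⊆ ℕ be a finite set with |I| = k. Let z = (z₁,…,z_k) ∈ R_I and fix x₀ ∈ ℂ and i ∈ {1,…,k}. Then the function of a single complex variable w ↦ F_I((z₁,…,z_{i-1}, w, z_{i+1},…,z_k), x₀) is complex differentiable at w = z_i, with derivative equal to (f'(z_i) − (∂F_I/∂x)(z, z_i)) · L_{I,i}(z, x₀), where f' and ∂F_I/∂x denote derivatives with respect to the polynomial variable x. -/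
/-!
For `w` near `z i` the moved nodes `z[i ← w]` stay unisolvent, and
`F(z[i ← w]) = F(z) + (f(w) - F(z)(w)) · L_{z[i ← w], i}`: expanding `F(z)` in the Lagrange
basis of the moved nodes reproduces it, and `F(z)` agrees with `f` at every unmoved node.
The residual `f - F(z)` vanishes at `z i`, and by Cramer's rule `L_{z[i ← w], i}(x₀)` is a
rational function of `w` that is regular at `z i`; the product rule gives the derivative.
-/

open Matrix

noncomputable section

/-- The (square) generalized Vandermonde matrix `V_K(z)` with `(s,t)` entry `z_s ^ i_t`. -/
def vand {k : ℕ} (e : Fin k → ℕ) (z : Fin k → ℂ) : Matrix (Fin k) (Fin k) ℂ :=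
  Matrix.of fun s t => z s ^ e t

/-- The generalized Lagrange polynomial `L_{K,i}(z,x) = Σ_t (V_K(z)⁻¹)_{t,i} x^{i_t}`
in the square case `|K| = k`. -/
def lag {k : ℕ} (e : Fin k → ℕ) (z : Fin k → ℂ) (i : Fin k) : Polynomial ℂ :=
  ∑ t : Fin k, Polynomial.C ((vand e z)⁻¹ t i) * Polynomial.X ^ e t

/-- `F_K(z,·) := Σ_i f(z_i) L_{K,i}(z,·)`, the minimal-norm interpolant of `f` at `z`
with support `K`. -/
def FI {k : ℕ} (e : Fin k → ℕ) (f : Polynomial ℂ) (z : Fin k → ℂ) : Polynomial ℂ :=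
  ∑ i : Fin k, Polynomial.C (f.eval (z i)) * lag e z i

open Polynomial Filter Topology Function

namespace GeneralizedLagrange

variable {k : ℕ} (e : Fin k → ℕ)

def supportedPoly (c : Fin k → ℂ) : ℂ[X] :=
  ∑ t, C (c t) * X ^ e t

lemma eval_supportedPoly (c z : Fin k → ℂ) (s : Fin k) :
    (supportedPoly e c).eval (z s) = (vand e z *ᵥ c) s := by
  simp only [supportedPoly, eval_finsetSum, eval_mul, eval_C, eval_pow, eval_X, mulVec,
    dotProduct, vand, of_apply]
  exact Finset.sum_congr rfl fun t _ => mul_comm _ _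

lemma sum_C_mul_lag (z v : Fin k → ℂ) :
    ∑ s, C (v s) * lag e z s = supportedPoly e ((vand e z)⁻¹ *ᵥ v) := by
  simp only [lag, supportedPoly, mulVec, dotProduct, Finset.mul_sum, map_sum, Finset.sum_mul]
  rw [Finset.sum_comm]
  refine Finset.sum_congr rfl fun t _ => Finset.sum_congr rfl fun s _ => ?_
  rw [C_mul]
  ring

lemma FI_eq_supportedPoly (f : ℂ[X]) (z : Fin k → ℂ) :
    FI e f z = supportedPoly e ((vand e z)⁻¹ *ᵥ fun s => f.eval (z s)) :=
  sum_C_mul_lag e z _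

variable {e}

lemma sum_C_eval_mul_lag {z : Fin k → ℂ} (hz : IsUnit (vand e z).det) (c : Fin k → ℂ) :
    ∑ s, C ((supportedPoly e c).eval (z s)) * lag e z s = supportedPoly e c := by
  simp only [eval_supportedPoly, sum_C_mul_lag]
  rw [mulVec_mulVec, nonsing_inv_mul _ hz, one_mulVec]

lemma eval_FI_node (f : ℂ[X]) {z : Fin k → ℂ} (hz : IsUnit (vand e z).det) (s : Fin k) :
    (FI e f z).eval (z s) = f.eval (z s) := by
  rw [FI_eq_supportedPoly, eval_supportedPoly, mulVec_mulVec, mul_nonsing_inv _ hz, one_mulVec]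

lemma FI_update (f : ℂ[X]) {z : Fin k → ℂ} (hz : IsUnit (vand e z).det) {i : Fin k} {w : ℂ}
    (hw : IsUnit (vand e (update z i w)).det) :
    FI e f (update z i w) = FI e f z + C (f.eval w - (FI e f z).eval w) * lag e (update z i w) i := by
  have hF : FI e f z = ∑ s, C ((FI e f z).eval (update z i w s)) * lag e (update z i w) s := by
    rw [FI_eq_supportedPoly e f z, sum_C_eval_mul_lag hw]
  rw [← sub_eq_iff_eq_add', FI]
  conv_lhs => rw [hF]
  rw [← Finset.sum_sub_distrib, Finset.sum_eq_single i]
  · rw [update_self, ← sub_mul, ← C_sub]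
  · intro s _ hs
    rw [update_of_ne hs, eval_FI_node f hz, sub_self]
  · simp

variable (e)

def vandUpdate (z : Fin k → ℂ) (i : Fin k) : Matrix (Fin k) (Fin k) ℂ[X] :=
  of fun s t => if s = i then X ^ e t else C (z s ^ e t)

lemma vandUpdate_map_eval (z : Fin k → ℂ) (i : Fin k) (w : ℂ) :
    (vandUpdate e z i).map (eval w) = vand e (update z i w) := by
  ext s t
  by_cases hs : s = i <;> simp [vandUpdate, vand, update_apply, hs]

lemma det_vand_update (z : Fin k → ℂ) (i : Fin k) (w : ℂ) :
    (vand e (update z i w)).det = (vandUpdate e z i).det.eval w := by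
  rw [← vandUpdate_map_eval, ← coe_evalRingHom, ← RingHom.mapMatrix_apply, ← RingHom.map_det]

lemma adjugate_vand_update (z : Fin k → ℂ) (i : Fin k) (w : ℂ) (s t : Fin k) :
    (vand e (update z i w)).adjugate s t = ((vandUpdate e z i).adjugate s t).eval w := by
  rw [← vandUpdate_map_eval, ← coe_evalRingHom, ← RingHom.mapMatrix_apply,
    ← RingHom.map_adjugate]
  rfl

lemma eval_lag_update (z : Fin k → ℂ) (i : Fin k) (x₀ w : ℂ) :
    (lag e (update z i w) i).eval x₀ = ((vandUpdate e z i).det.eval w)⁻¹ *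
      (∑ t, (vandUpdate e z i).adjugate t i * C (x₀ ^ e t)).eval w := by
  simp only [lag, inv_def, Ring.inverse_eq_inv', Matrix.smul_apply, smul_eq_mul, eval_finsetSum,
    eval_mul, eval_C, eval_pow, eval_X, Finset.mul_sum, det_vand_update, adjugate_vand_update]
  exact Finset.sum_congr rfl fun t _ => by ring

variable {e}

lemma eventually_isUnit_det_vand_update {z : Fin k → ℂ} (hz : IsUnit (vand e z).det)
    (i : Fin k) : ∀ᶠ w in 𝓝 (z i), IsUnit (vand e (update z i w)).det := by
  have hcont : ContinuousAt (fun w => (vand e (update z i w)).det) (z i) := by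
    simp only [det_vand_update]
    exact (vandUpdate e z i).det.continuousAt
  have hne : (vand e (update z i (z i))).det ≠ 0 := by
    rw [update_eq_self]
    exact hz.ne_zero
  exact (hcont.eventually_ne hne).mono fun w => Ne.isUnit

lemma differentiableAt_eval_lag_update {z : Fin k → ℂ} (hz : IsUnit (vand e z).det)
    (i : Fin k) (x₀ : ℂ) :
    DifferentiableAt ℂ (fun w => (lag e (update z i w) i).eval x₀) (z i) := by
  have hne : (vandUpdate e z i).det.eval (z i) ≠ 0 := by
    rw [← det_vand_update, update_eq_self]
    exact hz.ne_zero
  simp only [eval_lag_update]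
  exact ((vandUpdate e z i).det.differentiableAt.inv hne).mul (Polynomial.differentiableAt _)

end GeneralizedLagrange

open GeneralizedLagrange in
theorem stmt7_general {k : ℕ} (e : Fin k → ℕ)
    (f : Polynomial ℂ) (z : Fin k → ℂ) (hz : IsUnit (vand e z).det)
    (x₀ : ℂ) (i : Fin k) :
    HasDerivAt (fun w : ℂ => (FI e f (Function.update z i w)).eval x₀)
      (((Polynomial.derivative f).eval (z i)
          - (Polynomial.derivative (FI e f z)).eval (z i)) * (lag e z i).eval x₀)
      (z i) := by
  have hF : (fun w => (FI e f (update z i w)).eval x₀) =ᶠ[𝓝 (z i)] fun w =>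
      (FI e f z).eval x₀ + (f.eval w - (FI e f z).eval w) * (lag e (update z i w) i).eval x₀ := by
    filter_upwards [eventually_isUnit_det_vand_update hz i] with w hw
    rw [FI_update f hz hw, eval_add, eval_mul, eval_C]
  have hresidual := (f.hasDerivAt (z i)).sub ((FI e f z).hasDerivAt (z i))
  have hlag := (differentiableAt_eval_lag_update hz i x₀).hasDerivAt
  refine (((hasDerivAt_const _ _).add (hresidual.mul hlag)).congr_of_eventuallyEq hF).congr_deriv ?_
  rw [Pi.sub_apply, eval_FI_node f hz, update_eq_self, sub_self, zero_mul, add_zero, zero_add]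

/-- for `|I| = k` and `z ∈ R_I`, the function `w ↦ F_I(z[i ← w], x₀)` is
complex differentiable at `w = z_i` with derivative
`(f'(z_i) − (∂F_I/∂x)(z, z_i)) · L_{I,i}(z, x₀)`. -/
theorem stmt7 {k : ℕ} (hk : 1 ≤ k) (e : Fin k → ℕ) (he : StrictMono e)
    (f : Polynomial ℂ) (z : Fin k → ℂ) (hz : IsUnit (vand e z).det)
    (x₀ : ℂ) (i : Fin k) :
    HasDerivAt (fun w : ℂ => (FI e f (Function.update z i w)).eval x₀)
      (((Polynomial.derivative f).eval (z i)
          - (Polynomial.derivative (FI e f z)).eval (z i)) * (lag e z i).eval x₀)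
      (z i) :=
  stmt7_general e f z hz x₀ i
end
end

section
/- Let f, g ∈ ℂ[x], k ≥ 1, and let I, J ⊆ ℕ be finite sets with |I| = |J| = k. Let z = (z₁,…,z_k) ∈ R_{I,J} and define f_z(x) := f(x) − F_I(z,x) and g_z(x) := g(x) − G_J(z,x). Suppose there exists an open neighborhood U ⊆ ℂ^k of z such that for all z̃ = (z̃₁,…,z̃_k) ∈ U and all z' ∈ U and all i = 1,…,k one has |F_I(z, z̃_i)|² + |G_J(z, z̃_i)|² ≤ |F_I(z', z̃_i)|² + |G_J(z', z̃_i)|². Then for every i = 1,…,k, f_z'(z_i)·conj(f(z_i)) + g_z'(z_i)·conj(g(z_i)) = 0; in particular z is a fixed point of the simplified Gauss-Newton iteration z_i ↦ z_i − (conj(f_z'(z_i)) f(z_i) + conj(g_z'(z_i)) g(z_i)) / (|f_z'(z_i)|² + |g_z'(z_i)|²) whenever the denominators are nonzero. -/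
open Matrix

noncomputable section

/-! Moving only the node `z_i` to `ζ` and testing the hypothesis with `z̃ = z'` equal to the moved
configuration, the interpolation property `F_I(z', z'_i) = f(z'_i)` shows that
`|f|² + |g|² - |F_I(z,·)|² - |G_J(z,·)|²` is `≥ 0` near `z_i` and vanishes at `z_i`: a local minimum.
Its derivative at `z_i` in the real direction `v ∈ ℂ` is `2 Re (v a)` with
`a = f_z'(z_i) conj f(z_i) + g_z'(z_i) conj g(z_i)` (again because `F_I(z, z_i) = f(z_i)`), so `a = 0`;
the Gauss-Newton correction has numerator `conj a`. -/

open Polynomial Filter Topology ComplexConjugate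

section Interpolation

variable {k : ℕ} (e : Fin k → ℕ) {z : Fin k → ℂ}

lemma eval_lag_of_isUnit_det (hz : IsUnit (vand e z).det) (i j : Fin k) :
    (lag e z i).eval (z j) = (1 : Matrix (Fin k) (Fin k) ℂ) j i := by
  rw [← mul_nonsing_inv (vand e z) hz, mul_apply]
  simp only [lag, vand, eval_finsetSum, eval_mul, eval_C, eval_pow, eval_X, of_apply]
  exact Finset.sum_congr rfl fun t _ => mul_comm _ _

lemma eval_FI_of_isUnit_det (f : ℂ[X]) (hz : IsUnit (vand e z).det) (j : Fin k) :
    (FI e f z).eval (z j) = f.eval (z j) := by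
  simp [FI, eval_finsetSum, eval_lag_of_isUnit_det e hz, one_apply]

lemma isOpen_setOf_isUnit_det_vand : IsOpen {z : Fin k → ℂ | IsUnit (vand e z).det} := by
  simp only [isUnit_iff_ne_zero]
  refine isOpen_ne_fun (Continuous.matrix_det ?_) continuous_const
  exact continuous_pi fun s => continuous_pi fun t => (continuous_apply s).pow _

end Interpolation

lemma HasDerivAt.hasDerivAt_norm_sq_comp_line {u : ℂ → ℂ} {u' w : ℂ} (hu : HasDerivAt u u' w)
    (v : ℂ) :
    HasDerivAt (fun s : ℝ => ‖u (w + s * v)‖ ^ 2) (2 * (v * u' * conj (u w)).re) 0 := by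
  have hline : HasDerivAt (fun s : ℂ => u (w + s * v)) (u' * v) ((0 : ℝ) : ℂ) := by
    have : HasDerivAt (fun s : ℂ => w + s * v) v 0 := by
      simpa using ((hasDerivAt_id (0 : ℂ)).mul_const v).const_add w
    exact HasDerivAt.comp_of_eq (0 : ℂ) hu this (by simp)
  simpa [Complex.inner, mul_comm v] using hline.comp_ofReal.norm_sq

lemma eq_zero_of_isLocalMin_of_hasDerivAt_line {φ : ℂ → ℝ} {w a : ℂ} (hφ : IsLocalMin φ w)
    (hderiv : ∀ v : ℂ, HasDerivAt (fun s : ℝ => φ (w + s * v)) (v * a).re 0) : a = 0 := by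
  have hdir : ∀ v : ℂ, (v * a).re = 0 := fun v => by
    have hφ' : IsLocalMin φ (w + ((0 : ℝ) : ℂ) * v) := by simpa using hφ
    have hmin := hφ'.comp_continuous (g := fun s : ℝ => w + s * v) (by fun_prop)
    exact hmin.hasDerivAt_eq_zero (hderiv v)
  apply Complex.ext
  · simpa using hdir 1
  · simpa using hdir Complex.I

lemma isLocalMin_norm_sq_sub_norm_sq_FI {k : ℕ} (e d : Fin k → ℕ) (f g : ℂ[X]) {z : Fin k → ℂ}
    (hze : IsUnit (vand e z).det) (hzd : IsUnit (vand d z).det)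
    {U : Set (Fin k → ℂ)} (hU : IsOpen U) (hzU : z ∈ U)
    (hmin : ∀ zt ∈ U, ∀ z' ∈ U, ∀ i : Fin k,
      ‖(FI e f z).eval (zt i)‖ ^ 2 + ‖(FI d g z).eval (zt i)‖ ^ 2 ≤
        ‖(FI e f z').eval (zt i)‖ ^ 2 + ‖(FI d g z').eval (zt i)‖ ^ 2) (i : Fin k) :
    IsLocalMin (fun ζ => (‖f.eval ζ‖ ^ 2 + ‖g.eval ζ‖ ^ 2)
      - (‖(FI e f z).eval ζ‖ ^ 2 + ‖(FI d g z).eval ζ‖ ^ 2)) (z i) := by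
  have hnear : ∀ᶠ ζ in 𝓝 (z i), Function.update z i ζ ∈
      U ∩ {z | IsUnit (vand e z).det} ∩ {z | IsUnit (vand d z).det} := by
    have hopen := (hU.inter (isOpen_setOf_isUnit_det_vand e)).inter (isOpen_setOf_isUnit_det_vand d)
    have hcont : Continuous (Function.update z i) := continuous_const.update i continuous_id
    refine hcont.continuousAt.eventually_mem (hopen.mem_nhds ?_)
    rw [Function.update_eq_self]
    exact ⟨⟨hzU, hze⟩, hzd⟩
  filter_upwards [hnear] with ζ ⟨⟨hζU, hζe⟩, hζd⟩
  have h := hmin _ hζU _ hζU i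
  rw [eval_FI_of_isUnit_det e f hζe, eval_FI_of_isUnit_det d g hζd, Function.update_self] at h
  simp only [eval_FI_of_isUnit_det e f hze, eval_FI_of_isUnit_det d g hzd, sub_self]
  linarith

theorem stmt8_general {k : ℕ}
    (e : Fin k → ℕ) (d : Fin k → ℕ)
    (f g : Polynomial ℂ) (z : Fin k → ℂ)
    (hze : IsUnit (vand e z).det) (hzd : IsUnit (vand d z).det)
    (U : Set (Fin k → ℂ)) (hU : IsOpen U) (hzU : z ∈ U)
    (hmin : ∀ zt ∈ U, ∀ z' ∈ U, ∀ i : Fin k,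
      ‖(FI e f z).eval (zt i)‖ ^ 2 + ‖(FI d g z).eval (zt i)‖ ^ 2 ≤
        ‖(FI e f z').eval (zt i)‖ ^ 2 + ‖(FI d g z').eval (zt i)‖ ^ 2) :
    ∀ i : Fin k,
      (Polynomial.derivative (f - FI e f z)).eval (z i) * (starRingEnd ℂ) (f.eval (z i))
        + (Polynomial.derivative (g - FI d g z)).eval (z i) * (starRingEnd ℂ) (g.eval (z i))
        = 0 ∧
      ((‖(Polynomial.derivative (f - FI e f z)).eval (z i)‖ ^ 2
          + ‖(Polynomial.derivative (g - FI d g z)).eval (z i)‖ ^ 2 : ℝ) ≠ 0 →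
        z i -
          ((starRingEnd ℂ) ((Polynomial.derivative (f - FI e f z)).eval (z i)) * f.eval (z i)
            + (starRingEnd ℂ) ((Polynomial.derivative (g - FI d g z)).eval (z i)) * g.eval (z i))
          / ((‖(Polynomial.derivative (f - FI e f z)).eval (z i)‖ ^ 2
              + ‖(Polynomial.derivative (g - FI d g z)).eval (z i)‖ ^ 2 : ℝ) : ℂ)
          = z i) := by
  intro i
  have hF := eval_FI_of_isUnit_det e f hze i
  have hG := eval_FI_of_isUnit_det d g hzd i
  set w := z i
  have hcrit : (2 : ℂ) * ((derivative (f - FI e f z)).eval w * conj (f.eval w)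
      + (derivative (g - FI d g z)).eval w * conj (g.eval w)) = 0 := by
    refine eq_zero_of_isLocalMin_of_hasDerivAt_line
      (isLocalMin_norm_sq_sub_norm_sq_FI e d f g hze hzd hU hzU hmin i) fun v => ?_
    have hline := fun p : ℂ[X] => (p.hasDerivAt w).hasDerivAt_norm_sq_comp_line v
    refine ((hline f).add (hline g)).sub ((hline _).add (hline _)) |>.congr_deriv ?_
    simp only [hF, hG, derivative_sub, eval_sub, Complex.mul_re, Complex.mul_im, Complex.add_re,
      Complex.sub_re, Complex.add_im, Complex.sub_im, Complex.re_ofNat, Complex.im_ofNat]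
    ring
  have hstat := (mul_eq_zero.mp hcrit).resolve_left two_ne_zero
  refine ⟨hstat, fun _ => ?_⟩
  have hconj := congrArg conj hstat
  simp only [map_add, map_mul, Complex.conj_conj, map_zero] at hconj
  rw [hconj, zero_div, sub_zero]

/-- if the perturbation is locally pointwise minimal at `z`, then for each `i`,
`f_z'(z_i)·conj(f(z_i)) + g_z'(z_i)·conj(g(z_i)) = 0`; in particular `z` is a fixed point of
the simplified Gauss-Newton iteration whenever the denominators are nonzero. -/
theorem stmt8 {k : ℕ} (hk : 1 ≤ k)
    (e : Fin k → ℕ) (he : StrictMono e) (d : Fin k → ℕ) (hd : StrictMono d)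
    (f g : Polynomial ℂ) (z : Fin k → ℂ)
    (hze : IsUnit (vand e z).det) (hzd : IsUnit (vand d z).det)
    (U : Set (Fin k → ℂ)) (hU : IsOpen U) (hzU : z ∈ U)
    (hmin : ∀ zt ∈ U, ∀ z' ∈ U, ∀ i : Fin k,
      ‖(FI e f z).eval (zt i)‖ ^ 2 + ‖(FI d g z).eval (zt i)‖ ^ 2 ≤
        ‖(FI e f z').eval (zt i)‖ ^ 2 + ‖(FI d g z').eval (zt i)‖ ^ 2) :
    ∀ i : Fin k,
      (Polynomial.derivative (f - FI e f z)).eval (z i) * (starRingEnd ℂ) (f.eval (z i))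
        + (Polynomial.derivative (g - FI d g z)).eval (z i) * (starRingEnd ℂ) (g.eval (z i))
        = 0 ∧
      ((‖(Polynomial.derivative (f - FI e f z)).eval (z i)‖ ^ 2
          + ‖(Polynomial.derivative (g - FI d g z)).eval (z i)‖ ^ 2 : ℝ) ≠ 0 →
        z i -
          ((starRingEnd ℂ) ((Polynomial.derivative (f - FI e f z)).eval (z i)) * f.eval (z i)
            + (starRingEnd ℂ) ((Polynomial.derivative (g - FI d g z)).eval (z i)) * g.eval (z i))
          / ((‖(Polynomial.derivative (f - FI e f z)).eval (z i)‖ ^ 2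
              + ‖(Polynomial.derivative (g - FI d g z)).eval (z i)‖ ^ 2 : ℝ) : ℂ)
          = z i) :=
  stmt8_general e d f g z hze hzd U hU hzU hmin
end
end

section
/- Let N > n ≥ 1, k ≥ 1, let f₁,…,f_N : ℂⁿ → ℂ be analytic functions, let B₁,…,B_N be linearly independent finite lists of analytic functions ℂⁿ → ℂ each of length ≥ k, and assume R_{\vec B} is nonempty. Then the infimum over z ∈ R_{\vec B} of ‖W_{\vec B}(z)‖² := Σ_{i=1}^N ‖p_i(z,·)‖²_{B_i} equals the infimum over (f̃₁,…,f̃_N) ∈ Ω_{\vec B,k}(f) of Σ_{i=1}^N ‖f_i − f̃_i‖²_{B_i}. -/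
open Matrix

noncomputable section

/-- The generalized Vandermonde matrix `V_B(z)` with `(i,j)` entry `b_j(z_i)`. -/
def vandB {n k m : ℕ} (B : Fin m → (Fin n → ℂ) → ℂ) (z : Fin k → Fin n → ℂ) :
    Matrix (Fin k) (Fin m) ℂ :=
  Matrix.of fun i j => B j (z i)

/-- Moore–Penrose pseudoinverse `V† = V*(VV*)⁻¹` of a full-row-rank matrix. -/
def pinv {k m : ℕ} (V : Matrix (Fin k) (Fin m) ℂ) : Matrix (Fin m) (Fin k) ℂ :=
  V.conjTranspose * (V * V.conjTranspose)⁻¹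

/-- The generalized Lagrange function `L_{B,i}(z,x) = Σ_t (V_B(z)†)_{t,i} b_t(x)`. -/
def lagB {n k m : ℕ} (B : Fin m → (Fin n → ℂ) → ℂ) (z : Fin k → Fin n → ℂ) (i : Fin k)
    (x : Fin n → ℂ) : ℂ :=
  ∑ t : Fin m, pinv (vandB B z) t i * B t x

/-- `M_B(z) = V_B(z) V_B(z)*`. -/
def MB {n k m : ℕ} (B : Fin m → (Fin n → ℂ) → ℂ) (z : Fin k → Fin n → ℂ) :
    Matrix (Fin k) (Fin k) ℂ :=
  vandB B z * (vandB B z).conjTranspose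

/-- The evaluation vector `(f(z₁),…,f(z_k))`. -/
def evalVecB {n k : ℕ} (f : (Fin n → ℂ) → ℂ) (z : Fin k → Fin n → ℂ) : Fin k → ℂ :=
  fun j => f (z j)

/-!
The coefficient vector `V† f_i(z)` of `p_i(z,·)`, with `V = V_{B_i}(z)`, solves `V c = f_i(z)`,
so every value of the left-hand set is a value of the right-hand one. Conversely, if
`V c = f_i(z)` then `V† f_i(z) = (V† V) c`, and `V† V` is an orthogonal projection, so
`‖V† f_i(z)‖ ≤ ‖c‖`: every value of the right-hand set dominates one of the left-hand set.
-/

namespace Matrix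

variable {n : Type*} [Fintype n] [DecidableEq n]

theorem isUnit_of_rank_eq_card {K : Type*} [Field K] {A : Matrix n n K}
    (h : A.rank = Fintype.card n) : IsUnit A := by
  refine mulVec_surjective_iff_isUnit.mp ((LinearMap.range_eq_top (f := A.mulVecLin)).mp ?_)
  exact Submodule.eq_top_of_finrank_eq (by rwa [Module.finrank_fintype_fun_eq_card])

open scoped Matrix.Norms.L2Operator in
theorem IsStarProjection.sum_norm_sq_mulVec_le {𝕜 : Type*} [RCLike 𝕜] {P : Matrix n n 𝕜}
    (hP : IsStarProjection P) (x : n → 𝕜) :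
    ∑ t, ‖(P *ᵥ x) t‖ ^ 2 ≤ ∑ t, ‖x t‖ ^ 2 := by
  have hle : ‖(EuclideanSpace.equiv n 𝕜).symm (P *ᵥ x)‖ ≤ ‖(EuclideanSpace.equiv n 𝕜).symm x‖ :=
    calc _ ≤ ‖P‖ * ‖(EuclideanSpace.equiv n 𝕜).symm x‖ := P.l2_opNorm_mulVec _
      _ ≤ 1 * ‖(EuclideanSpace.equiv n 𝕜).symm x‖ := by gcongr; exact hP.norm_le
      _ = _ := one_mul _
  simpa only [EuclideanSpace.norm_sq_eq, PiLp.continuousLinearEquiv_symm_apply] using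
    pow_le_pow_left₀ (norm_nonneg _) hle 2

end Matrix

section PseudoInverse

variable {k m : ℕ} {V : Matrix (Fin k) (Fin m) ℂ}

open ComplexOrder in
theorem isUnit_mul_conjTranspose_of_rank_eq (h : V.rank = k) : IsUnit (V * Vᴴ) :=
  Matrix.isUnit_of_rank_eq_card (by rw [Matrix.rank_self_mul_conjTranspose, h, Fintype.card_fin])

theorem mul_pinv_of_rank_eq (h : V.rank = k) : V * pinv V = 1 := by
  rw [pinv, ← Matrix.mul_assoc]
  exact Matrix.mul_nonsing_inv _ ((Matrix.isUnit_iff_isUnit_det _).mp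
    (isUnit_mul_conjTranspose_of_rank_eq h))

theorem isStarProjection_pinv_mul (h : V.rank = k) : IsStarProjection (pinv V * V) where
  isIdempotentElem := by
    rw [IsIdempotentElem, Matrix.mul_assoc, ← Matrix.mul_assoc V, mul_pinv_of_rank_eq h,
      Matrix.one_mul]
  isSelfAdjoint := by
    rw [IsSelfAdjoint, Matrix.star_eq_conjTranspose, pinv, Matrix.conjTranspose_mul,
      Matrix.conjTranspose_mul, Matrix.conjTranspose_nonsing_inv, Matrix.conjTranspose_mul,
      Matrix.conjTranspose_conjTranspose, Matrix.mul_assoc]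

theorem sum_norm_sq_pinv_mulVec_le (h : V.rank = k) (c : Fin m → ℂ) :
    ∑ t, ‖(pinv V *ᵥ (V *ᵥ c)) t‖ ^ 2 ≤ ∑ t, ‖c t‖ ^ 2 := by
  simpa only [Matrix.mulVec_mulVec] using
    (isStarProjection_pinv_mul h).sum_norm_sq_mulVec_le c

theorem mulVec_pinv_mulVec (h : V.rank = k) (y : Fin k → ℂ) : V *ᵥ (pinv V *ᵥ y) = y := by
  rw [Matrix.mulVec_mulVec, mul_pinv_of_rank_eq h, Matrix.one_mulVec]

end PseudoInverse

theorem forall_sub_sum_eq_zero_iff_evalVecB_eq {n k m : ℕ} (f : (Fin n → ℂ) → ℂ)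
    (B : Fin m → (Fin n → ℂ) → ℂ) (z : Fin k → Fin n → ℂ) (c : Fin m → ℂ) :
    (∀ j, f (z j) - ∑ t, c t * B t (z j) = 0) ↔ evalVecB f z = vandB B z *ᵥ c := by
  simp only [sub_eq_zero, funext_iff, evalVecB, Matrix.mulVec, dotProduct, vandB,
    Matrix.of_apply, mul_comm]

/-- A tuple of `Ω_{B⃗,k}(f)` is encoded by the coefficient vectors `c_i` of
`f_i − f̃_i = Σ_t c_{i,t} b_{i,t}` together with a common zero `z ∈ R_{B⃗}`. -/
theorem stmt13_general {N n k : ℕ}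
    (m : Fin N → ℕ)
    (f : Fin N → (Fin n → ℂ) → ℂ)
    (B : (i : Fin N) → Fin (m i) → (Fin n → ℂ) → ℂ) :
    sInf { r : ℝ | ∃ z : Fin k → Fin n → ℂ, (∀ i, (vandB (B i) z).rank = k) ∧
        r = ∑ i, ∑ t, ‖(pinv (vandB (B i) z) *ᵥ evalVecB (f i) z) t‖ ^ 2 } =
    sInf { r : ℝ | ∃ (c : (i : Fin N) → Fin (m i) → ℂ) (z : Fin k → Fin n → ℂ),
        (∀ i, (vandB (B i) z).rank = k) ∧
        (∀ (i : Fin N) (j : Fin k), f i (z j) - ∑ t, c i t * B i t (z j) = 0) ∧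
        r = ∑ i, ∑ t, ‖c i t‖ ^ 2 } := by
  refine csInf_eq_csInf_of_forall_exists_le ?_ ?_
  · rintro _ ⟨z, hz, rfl⟩
    refine ⟨_, ⟨fun i => pinv (vandB (B i) z) *ᵥ evalVecB (f i) z, z, hz, fun i => ?_, rfl⟩,
      le_rfl⟩
    rw [forall_sub_sum_eq_zero_iff_evalVecB_eq, mulVec_pinv_mulVec (hz i)]
  · rintro _ ⟨c, z, hz, hvan, rfl⟩
    refine ⟨_, ⟨z, hz, rfl⟩, Finset.sum_le_sum fun i _ => ?_⟩
    rw [(forall_sub_sum_eq_zero_iff_evalVecB_eq _ _ _ _).mp (hvan i)]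
    exact sum_norm_sq_pinv_mulVec_le (hz i) (c i)

/-- the infimum of `‖W_{B⃗}(z)‖² = Σ_i ‖p_i(z,·)‖²_{B_i}` over `z ∈ R_{B⃗}`
equals the infimum of `Σ_i ‖f_i − f̃_i‖²_{B_i}` over `Ω_{B⃗,k}(f)`. The coefficient vector
of `p_i(z,·)` in the basis `B_i` is `V_{B_i}(z)† f_i(z)`, and tuples of `Ω_{B⃗,k}(f)` are
parametrized by their (unique) coefficient vectors `c_i` with `f̃_i = f_i − Σ_t c_{i,t} b_{i,t}`
vanishing at some point of `R_{B⃗}`. -/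
theorem stmt13 {N n k : ℕ} (hn : 1 ≤ n) (hN : n < N) (hk : 1 ≤ k)
    (m : Fin N → ℕ) (hm : ∀ i, k ≤ m i)
    (f : Fin N → (Fin n → ℂ) → ℂ) (hf : ∀ i, AnalyticOnNhd ℂ (f i) Set.univ)
    (B : (i : Fin N) → Fin (m i) → (Fin n → ℂ) → ℂ)
    (hBa : ∀ i t, AnalyticOnNhd ℂ (B i t) Set.univ)
    (hBli : ∀ i, LinearIndependent ℂ (B i))
    (hne : ∃ z : Fin k → Fin n → ℂ, ∀ i, (vandB (B i) z).rank = k) :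
    sInf { r : ℝ | ∃ z : Fin k → Fin n → ℂ, (∀ i, (vandB (B i) z).rank = k) ∧
        r = ∑ i, ∑ t, ‖(pinv (vandB (B i) z) *ᵥ evalVecB (f i) z) t‖ ^ 2 } =
    sInf { r : ℝ | ∃ (c : (i : Fin N) → Fin (m i) → ℂ) (z : Fin k → Fin n → ℂ),
        (∀ i, (vandB (B i) z).rank = k) ∧
        (∀ (i : Fin N) (j : Fin k), f i (z j) - ∑ t, c i t * B i t (z j) = 0) ∧
        r = ∑ i, ∑ t, ‖c i t‖ ^ 2 } :=
  stmt13_general m f B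
end
end
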